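/- Let 2 ≤ K ≤ N be integers and q ∈ (0,1) with K^q ≥ e, let ξ > 0 and set λ = 2/log(1+ξ²). For K ≤ n ≤ N−1 set b_n = log(n/K^{1−q}), y_{n,2} = log(e^{2b_n} + ξ²)·(e^{2b_n} + ξ²)^{−1/2}, and for integers s ≥ 3, y_{n,s} = (s−1)^{−1/2}·(e^{2b_n/(s−1)} + ξ²)^{−(s−1)/2}. Then: (i) Σ_{n=K}^{N−1} y_{n,2} ≤ 2·K^{1−q}·(log N)²; (ii) Σ_{n=K}^{N−1} Σ_{3 ≤ s ≤ λ b_n} y_{n,s} ≤ 2·λ^{1/2}·K^{1−q}·(log N)^{3/2}; (iii) Σ_{n=K}^{N−1} Σ_{s > λ b_n} y_{n,s} ≤ ( (1+ξ²)^{1/2} / (1 − (1+ξ²)^{−1/2}) )·K^{1−q}·log N. -/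

import Mathlib

open Real Finset

private lemma aux_one_div_le {n : ℕ} (hn : 2 ≤ n) :
    (1:ℝ)/n ≤ Real.log n - Real.log ((n:ℝ)-1) := by
  have h2 : (2:ℝ) ≤ n := by exact_mod_cast hn
  have h1 : (0:ℝ) < (n:ℝ) - 1 := by linarith
  have hn0 : (0:ℝ) < n := by linarith
  have h := Real.log_le_sub_one_of_pos (x := ((n:ℝ)-1)/n) (by positivity)
  rw [Real.log_div (by linarith) (by linarith)] at h
  have he : ((n:ℝ)-1)/n - 1 = -(1/n) := by field_simp; ring
  rw [he] at h
  linarith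

private lemma harm_sum {K : ℕ} (hK : 2 ≤ K) (M : ℕ) (hM : K - 1 ≤ M) :
    ∑ n ∈ Finset.Icc K M, (1:ℝ)/n ≤ Real.log M - Real.log ((K:ℝ)-1) := by
  induction M, hM using Nat.le_induction with
  | base =>
    rw [Finset.Icc_eq_empty (by omega)]
    have hc : ((K - 1 : ℕ):ℝ) = (K:ℝ) - 1 := by
      have h1 : 1 ≤ K := by omega
      push_cast [h1]; ring
    rw [Finset.sum_empty, hc]
    linarith
  | succ M hM ih =>
    rw [Finset.sum_Icc_succ_top (by omega)]
    have h2 : 2 ≤ M + 1 := by omega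
    have haux := aux_one_div_le h2
    have hc : ((M+1:ℕ):ℝ) - 1 = (M:ℝ) := by push_cast; ring
    rw [hc] at haux
    push_cast at haux ⊢
    linarith

private lemma sqrt_sum (M : ℕ) :
    ∑ s ∈ Finset.Icc 3 M, ((s:ℝ)-1) ^ (-(1:ℝ)/2) ≤ 2 * Real.sqrt ((M:ℝ)-1) := by
  induction M with
  | zero => rw [Finset.Icc_eq_empty (by omega), Finset.sum_empty]; positivity
  | succ M ih =>
    by_cases h3 : 3 ≤ M + 1
    · rw [Finset.sum_Icc_succ_top h3]
      have hM2 : 2 ≤ M := by omega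
      have hMr : (2:ℝ) ≤ M := by exact_mod_cast hM2
      have hterm : (((M:ℕ)+1:ℝ)-1) ^ (-(1:ℝ)/2) = (Real.sqrt M)⁻¹ := by
        have he : ((M:ℝ)+1)-1 = (M:ℝ) := by ring
        rw [he, neg_div, Real.rpow_neg (by positivity), ← Real.sqrt_eq_rpow]
      push_cast
      rw [hterm]
      have hc : ((M:ℝ)+1)-1 = (M:ℝ) := by ring
      rw [hc]
      set a := Real.sqrt (M:ℝ) with ha
      set w := Real.sqrt ((M:ℝ)-1) with hw
      have ha2 : a*a = (M:ℝ) := Real.mul_self_sqrt (by positivity)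
      have hw2 : w*w = (M:ℝ)-1 := Real.mul_self_sqrt (by linarith)
      have ha0 : 0 ≤ a := Real.sqrt_nonneg _
      have hw0 : 0 ≤ w := Real.sqrt_nonneg _
      have ha1 : 1 ≤ a := by nlinarith
      have key : 2*w*a + 1 ≤ 2*(a*a) := by nlinarith [sq_nonneg (a - w)]
      have hstep : 2*w + a⁻¹ ≤ 2*a := by
        rw [show 2*w + a⁻¹ = (2*w*a+1)/a by field_simp]
        rw [div_le_iff₀ (by linarith)]
        nlinarith
      linarith
    · rw [Finset.Icc_eq_empty (by omega), Finset.sum_empty]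
      positivity

set_option maxHeartbeats 1000000 in
theorem stmt_18 (K N : ℕ) (hK2 : 2 ≤ K) (hKN : K ≤ N)
    (q : ℝ) (hq : q ∈ Set.Ioo (0 : ℝ) 1) (hKq : Real.exp 1 ≤ (K : ℝ) ^ q)
    (ξ : ℝ) (hξ : 0 < ξ)
    (lam : ℝ) (hlam : lam = 2 / Real.log (1 + ξ ^ 2))
    (b : ℕ → ℝ) (hb : ∀ n : ℕ, b n = Real.log (n / (K : ℝ) ^ (1 - q)))
    (y2 : ℕ → ℝ)
    (hy2 : ∀ n : ℕ, y2 n = Real.log (Real.exp (2 * b n) + ξ ^ 2)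
        * (Real.exp (2 * b n) + ξ ^ 2) ^ (-(1 : ℝ) / 2))
    (ys : ℕ → ℕ → ℝ)
    (hys : ∀ n s : ℕ, 3 ≤ s → ys n s = ((s : ℝ) - 1) ^ (-(1 : ℝ) / 2)
        * (Real.exp (2 * b n / ((s : ℝ) - 1)) + ξ ^ 2) ^ (-((s : ℝ) - 1) / 2)) :
    (∑ n ∈ Finset.Icc K (N - 1), y2 n ≤ 2 * (K : ℝ) ^ (1 - q) * (Real.log N) ^ 2) ∧
    (∑ n ∈ Finset.Icc K (N - 1), ∑ s ∈ Finset.Icc 3 ⌊lam * b n⌋₊, ys n s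
        ≤ 2 * Real.sqrt lam * (K : ℝ) ^ (1 - q) * (Real.log N) ^ (3 / 2 : ℝ)) ∧
    (∑ n ∈ Finset.Icc K (N - 1),
        ∑' s : ℕ, (if 3 ≤ s ∧ lam * b n < (s : ℝ) then ENNReal.ofReal (ys n s) else 0)
      ≤ ENNReal.ofReal
          ((Real.sqrt (1 + ξ ^ 2) / (1 - (Real.sqrt (1 + ξ ^ 2))⁻¹))
            * (K : ℝ) ^ (1 - q) * Real.log N)) := by
  obtain ⟨hq0, hq1⟩ := hq
  set c : ℝ := (K:ℝ) ^ (1 - q) with hc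
  set L : ℝ := Real.log N with hL
  have hK1 : (1:ℝ) < K := by exact_mod_cast (by omega : 1 < K)
  have hc0 : 0 < c := Real.rpow_pos_of_pos (by linarith) _
  have hc1 : 1 ≤ c := Real.one_le_rpow hK1.le (by linarith)
  have hN2 : 2 ≤ N := le_trans hK2 hKN
  have hK2r : (2:ℝ) ≤ K := by exact_mod_cast hK2
  have hL0 : 0 < L := Real.log_pos (by exact_mod_cast (by omega : 1 < N))
  -- per-n basic facts
  have hfacts : ∀ n ∈ Finset.Icc K (N-1),
      (0:ℝ) < n ∧ Real.exp (b n) = n / c ∧ 1 ≤ b n ∧ b n ≤ L := by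
    intro n hn
    rw [Finset.mem_Icc] at hn
    obtain ⟨hKn, hnN⟩ := hn
    have hnN' : n ≤ N := by omega
    have hn0 : (0:ℝ) < n := by
      have : (K:ℝ) ≤ n := by exact_mod_cast hKn
      linarith
    have hnc : 0 < (n:ℝ)/c := by positivity
    have hexp : Real.exp (b n) = n / c := by rw [hb n, Real.exp_log hnc]
    have hKc : (K:ℝ)/c = (K:ℝ)^q := by
      rw [div_eq_iff hc0.ne', hc, ← Real.rpow_add (by linarith : (0:ℝ) < K),
        show q+(1-q) = 1 by ring, Real.rpow_one]
    have hb1 : 1 ≤ b n := by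
      rw [hb n, Real.le_log_iff_exp_le hnc]
      calc Real.exp 1 ≤ (K:ℝ)^q := hKq
        _ = (K:ℝ)/c := hKc.symm
        _ ≤ (n:ℝ)/c := by
            have hKnr : (K:ℝ) ≤ n := by exact_mod_cast hKn
            gcongr
    have hbL : b n ≤ L := by
      rw [hb n, hL]
      have h1 : (n:ℝ)/c ≤ n := by
        rw [div_le_iff₀ hc0]; nlinarith
      calc Real.log ((n:ℝ)/c) ≤ Real.log n := Real.log_le_log hnc h1
        _ ≤ Real.log N := by
            apply Real.log_le_log hn0
            exact_mod_cast hnN'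
    exact ⟨hn0, hexp, hb1, hbL⟩
  have hHarm : ∑ n ∈ Finset.Icc K (N-1), (1:ℝ)/n ≤ L := by
    have h := harm_sum hK2 (N-1) (by omega)
    have hK1' : (1:ℝ) ≤ (K:ℝ) - 1 := by linarith
    have hlogK1 : 0 ≤ Real.log ((K:ℝ)-1) := Real.log_nonneg hK1'
    have hN1 : (1:ℝ) ≤ ((N-1:ℕ):ℝ) := by exact_mod_cast (by omega : 1 ≤ N - 1)
    have hcast : Real.log ((N-1:ℕ):ℝ) ≤ L := by
      apply Real.log_le_log (by linarith)
      exact_mod_cast (by omega : N - 1 ≤ N)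
    linarith
  refine ⟨?_, ?_, ?_⟩
  · -- part (i)
    have hterm1 : ∀ n ∈ Finset.Icc K (N-1), y2 n ≤ (2*L*c) * (1/n) := by
      intro n hn
      obtain ⟨hn0, hexp, hb1, hbL⟩ := hfacts n hn
      set w : ℝ := Real.exp (b n) with hwdef
      have hw1 : 1 ≤ w := Real.one_le_exp (by linarith)
      have hw0 : 0 < w := by linarith
      have hB : Real.exp (2 * b n) = w * w := by
        rw [show 2 * b n = b n + b n by ring, Real.exp_add]
      set A : ℝ := Real.exp (2*b n) + ξ^2 with hA
      have hA0 : 0 < A := by positivity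
      have hwwA : w*w ≤ A := by rw [hA, hB]; nlinarith
      set a : ℝ := Real.sqrt A with ha
      have ha2 : a*a = A := Real.mul_self_sqrt hA0.le
      have ha0 : 0 < a := Real.sqrt_pos.mpr hA0
      have haw : w ≤ a := by
        rw [ha, show w = Real.sqrt (w*w) from (Real.sqrt_mul_self hw0.le).symm]
        exact Real.sqrt_le_sqrt hwwA
      have hlogB : Real.log (w*w) = 2 * b n := by
        rw [← hB, Real.log_exp]
      have hratio : Real.log (A/(w*w)) ≤ 2*(a/w - 1) := by
        have h1 : Real.sqrt (A/(w*w)) = a/w := by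
          rw [Real.sqrt_div hA0.le, ha, Real.sqrt_mul_self hw0.le]
        have h2 := Real.log_le_sub_one_of_pos (x := Real.sqrt (A/(w*w))) (by rw [h1]; positivity)
        have h3 : Real.log (Real.sqrt (A/(w*w))) = Real.log (A/(w*w))/2 := Real.log_sqrt (by positivity)
        rw [h3, h1] at h2
        linarith
      have hlogA : Real.log A ≤ 2*b n + 2*(a/w - 1) := by
        rw [Real.log_div hA0.ne' (by positivity), hlogB] at hratio
        linarith
      have h1 : Real.log A * w ≤ (2*b n)*w + 2*a - 2*w := by
        have h4 := mul_le_mul_of_nonneg_right hlogA hw0.le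
        have he : (2*b n + 2*(a/w - 1))*w = (2*b n)*w + 2*a - 2*w := by field_simp; ring
        rw [he] at h4
        linarith
      have h2 : Real.log A * w ≤ (2*b n) * a := by nlinarith [hb1, haw]
      have hy2n : y2 n = Real.log A * a⁻¹ := by
        rw [hy2 n, ← hA, neg_div, Real.rpow_neg hA0.le, ← Real.sqrt_eq_rpow, ← ha]
      have hfin : Real.log A * a⁻¹ ≤ (2*b n) * w⁻¹ := by
        rw [← div_eq_mul_inv, ← div_eq_mul_inv, div_le_div_iff₀ ha0 hw0]
        exact h2
      have hwinv : w⁻¹ = c * (1/n) := by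
        rw [hexp, inv_div]; ring
      rw [hy2n]
      calc Real.log A * a⁻¹ ≤ (2*b n)*w⁻¹ := hfin
        _ ≤ (2*L)*w⁻¹ := by
            apply mul_le_mul_of_nonneg_right (by linarith) (by positivity)
        _ = (2*L*c)*(1/n) := by rw [hwinv]; ring
    calc ∑ n ∈ Finset.Icc K (N-1), y2 n ≤ ∑ n ∈ Finset.Icc K (N-1), (2*L*c)*(1/n) :=
          Finset.sum_le_sum hterm1
      _ = (2*L*c) * ∑ n ∈ Finset.Icc K (N-1), (1:ℝ)/n := by rw [Finset.mul_sum]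
      _ ≤ (2*L*c) * L := mul_le_mul_of_nonneg_left hHarm (by positivity)
      _ = 2 * c * L^2 := by ring
  · -- part (ii)
    have hlam0 : 0 < lam := by
      rw [hlam]
      exact div_pos two_pos (Real.log_pos (by nlinarith))
    have hterm2 : ∀ n ∈ Finset.Icc K (N-1),
        ∑ s ∈ Finset.Icc 3 ⌊lam * b n⌋₊, ys n s ≤ (2*Real.sqrt lam*Real.sqrt L*c) * (1/n) := by
      intro n hn
      obtain ⟨hn0, hexp, hb1, hbL⟩ := hfacts n hn
      have hcn : Real.exp (-(b n)) = c/n := by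
        rw [Real.exp_neg, hexp, inv_div]
      have hstepA : ∀ s ∈ Finset.Icc 3 ⌊lam * b n⌋₊,
          ys n s ≤ ((s:ℝ)-1) ^ (-(1:ℝ)/2) * (c/n) := by
        intro s hs
        rw [Finset.mem_Icc] at hs
        have h3s : 3 ≤ s := hs.1
        have ht2 : (2:ℝ) ≤ (s:ℝ)-1 := by
          have h3r : (3:ℝ) ≤ s := by exact_mod_cast h3s
          linarith
        have ht0 : (0:ℝ) < (s:ℝ)-1 := by linarith
        rw [hys n s h3s]
        apply mul_le_mul_of_nonneg_left _ (Real.rpow_nonneg (by linarith) _)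
        have hb2 : (Real.exp (2*b n/((s:ℝ)-1)) + ξ^2) ^ (-((s:ℝ)-1)/2)
            ≤ (Real.exp (2*b n/((s:ℝ)-1))) ^ (-((s:ℝ)-1)/2) :=
          Real.rpow_le_rpow_of_nonpos (Real.exp_pos _) (by nlinarith [sq_nonneg ξ]) (by linarith)
        have hb3 : (Real.exp (2*b n/((s:ℝ)-1))) ^ (-((s:ℝ)-1)/2) = c/n := by
          rw [← Real.exp_mul, show 2*b n/((s:ℝ)-1) * (-((s:ℝ)-1)/2) = -(b n) by
            field_simp, hcn]
        calc (Real.exp (2*b n/((s:ℝ)-1)) + ξ^2) ^ (-((s:ℝ)-1)/2)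
            ≤ (Real.exp (2*b n/((s:ℝ)-1))) ^ (-((s:ℝ)-1)/2) := hb2
          _ = c/n := hb3
      have h10 : Real.sqrt ((⌊lam*b n⌋₊:ℝ)-1) ≤ Real.sqrt lam * Real.sqrt L := by
        have h5 : ((⌊lam*b n⌋₊:ℝ)-1) ≤ lam * b n := by
          have h5' := Nat.floor_le (by positivity : (0:ℝ) ≤ lam * b n)
          linarith
        calc Real.sqrt ((⌊lam*b n⌋₊:ℝ)-1) ≤ Real.sqrt (lam*b n) := Real.sqrt_le_sqrt h5
          _ = Real.sqrt lam * Real.sqrt (b n) := Real.sqrt_mul hlam0.le _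
          _ ≤ Real.sqrt lam * Real.sqrt L :=
              mul_le_mul_of_nonneg_left (Real.sqrt_le_sqrt hbL) (Real.sqrt_nonneg _)
      calc ∑ s ∈ Finset.Icc 3 ⌊lam*b n⌋₊, ys n s
          ≤ ∑ s ∈ Finset.Icc 3 ⌊lam*b n⌋₊, ((s:ℝ)-1) ^ (-(1:ℝ)/2) * (c/n) :=
            Finset.sum_le_sum hstepA
        _ = (∑ s ∈ Finset.Icc 3 ⌊lam*b n⌋₊, ((s:ℝ)-1) ^ (-(1:ℝ)/2)) * (c/n) := by
            rw [← Finset.sum_mul]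
        _ ≤ (2 * Real.sqrt ((⌊lam*b n⌋₊:ℝ)-1)) * (c/n) :=
            mul_le_mul_of_nonneg_right (sqrt_sum _) (by positivity)
        _ ≤ (2 * (Real.sqrt lam * Real.sqrt L)) * (c/n) :=
            mul_le_mul_of_nonneg_right (by linarith) (by positivity)
        _ = (2*Real.sqrt lam*Real.sqrt L*c) * (1/n) := by ring
    have hL32 : L ^ ((3:ℝ)/2) = L * Real.sqrt L := by
      rw [show (3:ℝ)/2 = 1 + 1/2 by norm_num, Real.rpow_add hL0, Real.rpow_one,
        Real.sqrt_eq_rpow]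
    calc ∑ n ∈ Finset.Icc K (N-1), ∑ s ∈ Finset.Icc 3 ⌊lam*b n⌋₊, ys n s
        ≤ ∑ n ∈ Finset.Icc K (N-1), (2*Real.sqrt lam*Real.sqrt L*c)*(1/n) :=
          Finset.sum_le_sum hterm2
      _ = (2*Real.sqrt lam*Real.sqrt L*c) * ∑ n ∈ Finset.Icc K (N-1), (1:ℝ)/n := by
          rw [← Finset.mul_sum]
      _ ≤ (2*Real.sqrt lam*Real.sqrt L*c) * L :=
          mul_le_mul_of_nonneg_left hHarm (by positivity)
      _ = 2 * Real.sqrt lam * c * L ^ ((3:ℝ)/2) := by rw [hL32]; ring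
  · -- part (iii)
    have hLξ : 0 < Real.log (1+ξ^2) := Real.log_pos (by nlinarith)
    have hLne : Real.log (1+ξ^2) ≠ 0 := ne_of_gt hLξ
    have hsq1 : 1 < Real.sqrt (1+ξ^2) := by
      nlinarith [Real.sq_sqrt (show (0:ℝ) ≤ 1+ξ^2 by positivity),
        Real.sqrt_nonneg (1+ξ^2), mul_pos hξ hξ, sq_nonneg ξ]
    set r : ℝ := (Real.sqrt (1+ξ^2))⁻¹ with hrdef
    have hr0 : 0 < r := inv_pos.mpr (by linarith)
    have hr1 : r < 1 := by
      rw [hrdef]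
      exact inv_lt_one_of_one_lt₀ hsq1
    have hrinv : r⁻¹ = Real.sqrt (1+ξ^2) := by rw [hrdef, inv_inv]
    have hrr : r = (1+ξ^2) ^ (-(1:ℝ)/2) := by
      rw [hrdef, neg_div, Real.rpow_neg (by positivity), ← Real.sqrt_eq_rpow]
    have hlogr : Real.log r = -Real.log (1+ξ^2)/2 := by
      rw [hrr, Real.log_rpow (by positivity)]; ring
    set C : ℝ := r⁻¹/(1-r) with hC
    have hC0 : 0 ≤ C := by
      rw [hC]
      apply div_nonneg (by positivity) (by linarith)
    have hterm3 : ∀ n ∈ Finset.Icc K (N-1),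
        (∑' s : ℕ, (if 3 ≤ s ∧ lam * b n < (s:ℝ) then ENNReal.ofReal (ys n s) else 0))
          ≤ ENNReal.ofReal (C * c * (1/n)) := by
      intro n hn
      obtain ⟨hn0, hexp, hb1, hbL⟩ := hfacts n hn
      have hcn : Real.exp (-(b n)) = c/n := by rw [Real.exp_neg, hexp, inv_div]
      have hlb0 : (0:ℝ) ≤ lam * b n := by
        have hlam0 : 0 < lam := by rw [hlam]; exact div_pos two_pos hLξ
        nlinarith
      set m : ℕ := ⌊lam * b n⌋₊ + 1 with hm
      have hm1 : 1 ≤ m := by omega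
      set g : ℕ → ℝ := fun s => if m ≤ s then r^(s-1) else 0 with hg
      have hnonneg : ∀ s, 0 ≤ g s := by
        intro s; rw [hg]; dsimp only
        split
        · positivity
        · exact le_rfl
      have hgle : ∀ s, g s ≤ r⁻¹ * r^s := by
        intro s; rw [hg]; dsimp only
        split
        · rename_i hms
          cases s with
          | zero => omega
          | succ k =>
            rw [show k+1-1 = k from rfl, pow_succ,
              show r⁻¹*(r^k*r) = (r⁻¹*r)*r^k by ring, inv_mul_cancel₀ (ne_of_gt hr0), one_mul]
        · positivity
      have hsummable : Summable g :=
        Summable.of_nonneg_of_le hnonneg hgle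
          ((summable_geometric_of_lt_one hr0.le hr1).mul_left r⁻¹)
      have htsum : ∑' s, g s ≤ r^(m-1) * (1-r)⁻¹ := by
        have heq := Summable.sum_add_tsum_nat_add (f := g) m hsummable
        have h0 : ∑ i ∈ Finset.range m, g i = 0 := by
          apply Finset.sum_eq_zero
          intro i hi
          rw [Finset.mem_range] at hi
          rw [hg]; dsimp only
          rw [if_neg (by omega)]
        have h1 : ∀ k:ℕ, g (k + m) = r^(m-1) * r^k := by
          intro k
          rw [hg]; dsimp only
          rw [if_pos (by omega), show k + m - 1 = (m-1) + k by omega, pow_add]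
        calc ∑' s, g s = ∑ i ∈ Finset.range m, g i + ∑' k, g (k + m) := heq.symm
          _ = ∑' k, r^(m-1) * r^k := by rw [h0, zero_add]; exact tsum_congr h1
          _ ≤ r^(m-1) * (1-r)⁻¹ := le_of_eq (by
              rw [tsum_mul_left, tsum_geometric_of_lt_one hr0.le hr1])

      have hpow : (r:ℝ)^(m-1) ≤ (c/n) * r⁻¹ := by
        have hm2 : m - 1 = ⌊lam * b n⌋₊ := by omega
        rw [hm2, ← Real.rpow_natCast r ⌊lam * b n⌋₊]
        have e2 : r ^ ((⌊lam*b n⌋₊:ℕ):ℝ) ≤ r ^ (lam * b n - 1) := by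
          apply Real.rpow_le_rpow_of_exponent_ge hr0 hr1.le
          have := Nat.lt_floor_add_one (lam * b n)
          linarith
        have e4 : Real.log r * (lam * b n) = -(b n) := by
          rw [hlogr, hlam]
          field_simp
        have e3 : r ^ (lam * b n - 1) = (c/n) * r⁻¹ := by
          rw [Real.rpow_sub hr0, Real.rpow_one, Real.rpow_def_of_pos hr0, e4, hcn,
            div_eq_mul_inv]
        rw [← e3]
        exact e2
      have hterm_le : ∀ s:ℕ,
          (if 3 ≤ s ∧ lam * b n < (s:ℝ) then ENNReal.ofReal (ys n s) else 0)
            ≤ ENNReal.ofReal (g s) := by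
        intro s
        split
        · rename_i hcond
          obtain ⟨h3s, hlt⟩ := hcond
          have hms : m ≤ s := by
            have := (Nat.floor_lt hlb0).mpr hlt
            omega
          have hgs : g s = r^(s-1) := by rw [hg]; dsimp only; rw [if_pos hms]
          rw [hgs]
          apply ENNReal.ofReal_le_ofReal
          have ht2 : (2:ℝ) ≤ (s:ℝ)-1 := by
            have h3r : (3:ℝ) ≤ s := by exact_mod_cast h3s
            linarith
          rw [hys n s h3s]
          have hf1 : ((s:ℝ)-1) ^ (-(1:ℝ)/2) ≤ 1 :=
            Real.rpow_le_one_of_one_le_of_nonpos (by linarith) (by norm_num)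
          have hf2 : (Real.exp (2*b n/((s:ℝ)-1)) + ξ^2) ^ (-((s:ℝ)-1)/2)
              ≤ ((1:ℝ)+ξ^2) ^ (-((s:ℝ)-1)/2) := by
            apply Real.rpow_le_rpow_of_nonpos (by positivity) _ (by linarith)
            have hexp1 : (1:ℝ) ≤ Real.exp (2*b n/((s:ℝ)-1)) :=
              Real.one_le_exp (div_nonneg (by linarith) (by linarith))
            linarith
          have hf3 : ((1:ℝ)+ξ^2) ^ (-((s:ℝ)-1)/2) = r^(s-1) := by
            rw [hrr, ← Real.rpow_natCast ((1+ξ^2) ^ (-(1:ℝ)/2)) (s-1),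
              ← Real.rpow_mul (by positivity)]
            congr 1
            have hcast : ((s-1:ℕ):ℝ) = (s:ℝ)-1 := by
              have h1s : 1 ≤ s := by omega
              push_cast [h1s]
              ring
            rw [hcast]
            ring
          calc ((s:ℝ)-1) ^ (-(1:ℝ)/2) * (Real.exp (2*b n/((s:ℝ)-1)) + ξ^2) ^ (-((s:ℝ)-1)/2)
              ≤ 1 * (((1:ℝ)+ξ^2) ^ (-((s:ℝ)-1)/2)) :=
                mul_le_mul hf1 hf2 (Real.rpow_nonneg (by positivity) _) zero_le_one
            _ = r^(s-1) := by rw [one_mul, hf3]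
        · exact zero_le'
      calc (∑' s : ℕ, (if 3 ≤ s ∧ lam * b n < (s:ℝ) then ENNReal.ofReal (ys n s) else 0))
          ≤ ∑' s, ENNReal.ofReal (g s) := ENNReal.tsum_le_tsum hterm_le
        _ = ENNReal.ofReal (∑' s, g s) := (ENNReal.ofReal_tsum_of_nonneg hnonneg hsummable).symm
        _ ≤ ENNReal.ofReal (C * c * (1/n)) := by
            apply ENNReal.ofReal_le_ofReal
            have hinv1r : (0:ℝ) ≤ (1-r)⁻¹ := by
              apply inv_nonneg.mpr
              linarith
            calc ∑' s, g s ≤ r^(m-1) * (1-r)⁻¹ := htsum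
              _ ≤ ((c/n) * r⁻¹) * (1-r)⁻¹ := mul_le_mul_of_nonneg_right hpow hinv1r
              _ = C * c * (1/n) := by rw [hC, div_eq_mul_inv]; ring
    calc ∑ n ∈ Finset.Icc K (N-1),
          (∑' s : ℕ, (if 3 ≤ s ∧ lam * b n < (s:ℝ) then ENNReal.ofReal (ys n s) else 0))
        ≤ ∑ n ∈ Finset.Icc K (N-1), ENNReal.ofReal (C * c * (1/n)) :=
          Finset.sum_le_sum hterm3
      _ = ENNReal.ofReal (∑ n ∈ Finset.Icc K (N-1), C * c * (1/n)) :=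
          (ENNReal.ofReal_sum_of_nonneg (fun i hi =>
            mul_nonneg (mul_nonneg hC0 hc0.le) (by positivity))).symm
      _ ≤ ENNReal.ofReal (C * c * L) := by
          apply ENNReal.ofReal_le_ofReal
          rw [← Finset.mul_sum]
          apply mul_le_mul_of_nonneg_left hHarm
          have hinv1r : (0:ℝ) ≤ (1-r)⁻¹ := by
            apply inv_nonneg.mpr
            linarith
          rw [hC, div_eq_mul_inv]
          positivity
      _ = ENNReal.ofReal (Real.sqrt (1+ξ^2)/(1-r) * c * L) := by rw [hC, hrinv]
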